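/- arXiv:1101.3915 — 2 statements merged into one kernel-verified Lean document; each statement's English description precedes it below -/
import Mathlib

section
/- Let s' > 8 and 0 < η < ν < 1 be real numbers. Set s* = 2(√(s'+1) − 1), Δ = s' − s*, s1 = s* + ηΔ, s2 = s* + νΔ, and Q2(s) = s(s' − s). Then min(Q2(s1), Q2(s2)) ≥ 16(1 − ν²). -/
/-! Write `s' = s* + Δ`, so that `Q2 (s* + tΔ) = (1 - t) Δ (s* + tΔ)`. Since `s* > 4` and
`Δ = (√(s'+1) - 1)² > 4`, this is at least `16 (1 - t) (1 + t) = 16 (1 - t²)`, which is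
decreasing in `t ∈ [0, 1]`; so both endpoints `t = η` and `t = ν` give at least `16 (1 - ν²)`. -/

lemma three_lt_sqrt_add_one {x : ℝ} (hx : 8 < x) : 3 < Real.sqrt (x + 1) := by
  rw [show (3 : ℝ) = Real.sqrt (3 ^ 2) from (Real.sqrt_sq (by norm_num)).symm]
  exact Real.sqrt_lt_sqrt (by norm_num) (by linarith)

lemma sub_two_mul_sqrt_add_one_sub_one {x : ℝ} (hx : -1 ≤ x) :
    x - 2 * (Real.sqrt (x + 1) - 1) = (Real.sqrt (x + 1) - 1) ^ 2 := by
  have hsq : Real.sqrt (x + 1) ^ 2 = x + 1 := Real.sq_sqrt (by linarith)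
  linear_combination -hsq

lemma sq_mul_one_sub_sq_le_mul_sub {c a d t : ℝ} (hc : 0 ≤ c) (ha : c ≤ a) (hd : c ≤ d)
    (ht₀ : 0 ≤ t) (ht₁ : t ≤ 1) :
    c ^ 2 * (1 - t ^ 2) ≤ (a + t * d) * ((a + d) - (a + t * d)) := by
  have hlower : c * (1 + t) ≤ a + t * d := by nlinarith
  calc c ^ 2 * (1 - t ^ 2) = (c * (1 + t)) * c * (1 - t) := by ring
    _ ≤ (a + t * d) * d * (1 - t) := by
      have : 0 ≤ c * (1 + t) := by positivity
      gcongr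
      linarith
    _ = (a + t * d) * ((a + d) - (a + t * d)) := by ring

/-- For `s' > 8` and `0 < η < ν < 1`, with `s* = 2(√(s'+1) − 1)`, `Δ = s' − s*`,
`s1 = s* + ηΔ`, `s2 = s* + νΔ`, and `Q2(s) = s(s' − s)`:
`min(Q2(s1), Q2(s2)) ≥ 16(1 − ν²)`. -/
theorem stmt_9 (s' η ν : ℝ) (hs' : 8 < s') (hη : 0 < η) (hην : η < ν) (hν : ν < 1)
    (sstar Δ s1 s2 : ℝ) (Q2 : ℝ → ℝ)
    (hsstar : sstar = 2 * (Real.sqrt (s' + 1) - 1))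
    (hΔ : Δ = s' - sstar)
    (hs1 : s1 = sstar + η * Δ)
    (hs2 : s2 = sstar + ν * Δ)
    (hQ2 : ∀ s, Q2 s = s * (s' - s)) :
    min (Q2 s1) (Q2 s2) ≥ 16 * (1 - ν ^ 2) := by
  have hr := three_lt_sqrt_add_one hs'
  have hsstar4 : 4 ≤ sstar := by rw [hsstar]; linarith
  have hΔ4 : 4 ≤ Δ := by
    rw [hΔ, hsstar, sub_two_mul_sqrt_add_one_sub_one (by linarith)]
    nlinarith
  have hs'_eq : s' = sstar + Δ := by linarith
  have hQ (t : ℝ) (ht₀ : 0 ≤ t) (ht₁ : t ≤ 1) : 16 * (1 - t ^ 2) ≤ Q2 (sstar + t * Δ) := by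
    rw [hQ2, hs'_eq]
    convert sq_mul_one_sub_sq_le_mul_sub (by norm_num) hsstar4 hΔ4 ht₀ ht₁ using 1
    norm_num
  rw [ge_iff_le, le_min_iff, hs1, hs2]
  constructor
  · calc 16 * (1 - ν ^ 2) ≤ 16 * (1 - η ^ 2) := by gcongr
      _ ≤ Q2 (sstar + η * Δ) := hQ η hη.le (by linarith)
  · exact hQ ν (by linarith) hν.le
end

section
/- Fix β > 0, σ > 0, x0 > θ > 0. Define g2 as follows: for s' > 0, with a1 = (θ − x0)√(2β)/σ, b1 = (θ/2)√(2β)/σ, a2 = (√(2β)/σ)(θ√(s'+1) − x0), l1(s) = a1 + b1·s, s* = 2(√(s'+1) − 1), let g2(s') = (|a1|/(2π)) ∫_{s*}^{s'} (l1(s) − a2)·(s(s'−s))^{−3/2}·exp(−l1(s)²/(2s) − (l1(s)−a2)²/(2(s'−s))) ds. Set k = (1024β/(9π))(x0/θ − 1), p = 1 + (β/32)(θ/σ)², and u = (1/(2β))·log(1 + max(8, 1 + x0²/θ², 8σ²/(βθ²))). Then for every t > u, 2β·e^{2βt}·g2(e^{2βt} − 1) > k·exp(−p·e^{6βt}). 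-/
/-!
Since `l1 (s*) = a2`, the integrand of `g2 s'` is `b1 (s - s*) (s (s' - s))^(-3/2) e^(-…)`: it is
nonnegative on `[s*, s']` and bounded there, the Gaussian factor
`exp (-(b1 (s - s*))² / (2 (s' - s)))` absorbing the singularity at `s = s'`. On `[3s'/4, 13s'/16]`
every factor is explicit, which gives `g2 s' ≥ |a1| b1 / (32 π s') · e^(-E)` with
`E = 2 a1² / (3 s') + 13 b1² s' / 6 ≤ (β/32) (θ/σ)² (s' + 1)³`. For `t > u` the value
`s' = e^(2βt) - 1` is so large that the leftover factor `e^((s'+1)³)` beats all constants.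
-/

open Real Set MeasureTheory

lemma Real.rpow_neg_three_halves {x : ℝ} (hx : 0 < x) : x ^ (-(3 : ℝ) / 2) = √x / x ^ 2 := by
  rw [show -(3 : ℝ) / 2 = -(2 : ℕ) + 1 / 2 by norm_num, rpow_add hx, rpow_neg hx.le,
    rpow_natCast, ← sqrt_eq_rpow, inv_mul_eq_div]

lemma Real.rpow_neg_three_halves_mul_exp_neg_div_le {κ u : ℝ} (hκ : 0 < κ) (hu : 0 < u) :
    u ^ (-(3 : ℝ) / 2) * exp (-(κ / u)) ≤ 2 * √u / κ ^ 2 := by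
  have hexp : exp (-(κ / u)) ≤ 2 * u ^ 2 / κ ^ 2 := by
    have := quadratic_le_exp_of_nonneg (div_pos hκ hu).le
    rw [exp_neg, inv_le_comm₀ (exp_pos _) (by positivity), inv_div]
    calc κ ^ 2 / (2 * u ^ 2) = (κ / u) ^ 2 / 2 := by field_simp
      _ ≤ exp (κ / u) := by linarith [div_pos hκ hu]
  calc u ^ (-(3 : ℝ) / 2) * exp (-(κ / u)) ≤ √u / u ^ 2 * (2 * u ^ 2 / κ ^ 2) := by
        rw [rpow_neg_three_halves hu]; gcongr
    _ = 2 * √u / κ ^ 2 := by field_simp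

/-- The integrand of `g2`, written with `l1 s - a2 = b (s - c)` where `c = s*` is the zero of
`l1 - a2`. -/
noncomputable def g2Integrand (a b c s' s : ℝ) : ℝ :=
  b * (s - c) * (s * (s' - s)) ^ (-(3 : ℝ) / 2) *
    exp (-(a + b * s) ^ 2 / (2 * s) - (b * (s - c)) ^ 2 / (2 * (s' - s)))

lemma g2Integrand_eq {a b c a₂ s' : ℝ} (h : a + b * c = a₂) (s : ℝ) :
    (a + b * s - a₂) * (s * (s' - s)) ^ (-(3 : ℝ) / 2) *
      exp (-(a + b * s) ^ 2 / (2 * s) - (a + b * s - a₂) ^ 2 / (2 * (s' - s))) =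
      g2Integrand a b c s' s := by
  rw [g2Integrand, show a + b * s - a₂ = b * (s - c) by rw [← h]; ring]

namespace g2Integrand

variable {a b c s' s : ℝ}

lemma nonneg (hb : 0 ≤ b) (hc : 0 ≤ c) (hs : s ∈ Icc c s') : 0 ≤ g2Integrand a b c s' s := by
  have : 0 ≤ s - c := sub_nonneg.2 hs.1
  have : 0 ≤ s' - s := sub_nonneg.2 hs.2
  unfold g2Integrand
  have : 0 ≤ s := hc.trans hs.1
  positivity

lemma kernel_le_max (hb : 0 < b) (hs : s ∈ Ioo c s') :
    (s' - s) ^ (-(3 : ℝ) / 2) * exp (-(b * (s - c)) ^ 2 / (2 * (s' - s))) ≤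
      max (((s' - c) / 2) ^ (-(3 : ℝ) / 2)) (2 * √(s' - c) / ((b * (s' - c) / 2) ^ 2 / 2) ^ 2) := by
  obtain ⟨hcs, hss⟩ := hs
  have hu : 0 < s' - s := sub_pos.2 hss
  rcases le_or_gt ((s' - c) / 2) (s' - s) with hmid | hmid
  · refine le_max_of_le_left ?_
    calc (s' - s) ^ (-(3 : ℝ) / 2) * exp (-(b * (s - c)) ^ 2 / (2 * (s' - s)))
        ≤ (s' - s) ^ (-(3 : ℝ) / 2) * 1 := by
          gcongr; rw [exp_le_one_iff, neg_div]; exact neg_nonpos.2 (by positivity)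
      _ ≤ ((s' - c) / 2) ^ (-(3 : ℝ) / 2) := by
          rw [mul_one]; exact rpow_le_rpow_of_nonpos (by linarith) hmid (by norm_num)
  · refine le_max_of_le_right ?_
    have hκ : 0 < (b * (s' - c) / 2) ^ 2 / 2 := by
      have : 0 < s' - c := by linarith
      positivity
    calc (s' - s) ^ (-(3 : ℝ) / 2) * exp (-(b * (s - c)) ^ 2 / (2 * (s' - s)))
        ≤ (s' - s) ^ (-(3 : ℝ) / 2) * exp (-((b * (s' - c) / 2) ^ 2 / 2 / (s' - s))) := by
          gcongr
          have : 0 < s' - c := by linarith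
          have : b * (s' - c) / 2 ≤ b * (s - c) := by nlinarith
          rw [neg_div, neg_le_neg_iff, div_div, mul_comm 2]
          gcongr
      _ ≤ 2 * √(s' - s) / ((b * (s' - c) / 2) ^ 2 / 2) ^ 2 :=
          rpow_neg_three_halves_mul_exp_neg_div_le hκ hu
      _ ≤ 2 * √(s' - c) / ((b * (s' - c) / 2) ^ 2 / 2) ^ 2 := by gcongr

lemma bddAbove_image_Ioc (hb : 0 < b) (hc : 0 < c) :
    BddAbove (g2Integrand a b c s' '' Ioc c s') := by
  refine ⟨b * (s' - c) * c ^ (-(3 : ℝ) / 2) *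
    max (((s' - c) / 2) ^ (-(3 : ℝ) / 2)) (2 * √(s' - c) / ((b * (s' - c) / 2) ^ 2 / 2) ^ 2), ?_⟩
  rintro _ ⟨s, ⟨hcs, hss⟩, rfl⟩
  have hsc : 0 < s - c := sub_pos.2 hcs
  rcases hss.eq_or_lt with rfl | hss
  · simp only [g2Integrand, sub_self, mul_zero, zero_rpow (by norm_num : (-(3 : ℝ) / 2) ≠ 0),
      zero_mul]
    positivity
  have hs0 : 0 < s := hc.trans hcs
  have hu : 0 < s' - s := sub_pos.2 hss
  have hexp : exp (-(a + b * s) ^ 2 / (2 * s) - (b * (s - c)) ^ 2 / (2 * (s' - s))) =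
      exp (-(a + b * s) ^ 2 / (2 * s)) * exp (-(b * (s - c)) ^ 2 / (2 * (s' - s))) := by
    rw [← exp_add]; ring_nf
  calc g2Integrand a b c s' s
      = b * (s - c) * s ^ (-(3 : ℝ) / 2) * (exp (-(a + b * s) ^ 2 / (2 * s)) *
          ((s' - s) ^ (-(3 : ℝ) / 2) * exp (-(b * (s - c)) ^ 2 / (2 * (s' - s))))) := by
        rw [g2Integrand, mul_rpow hs0.le hu.le, hexp]; ring
    _ ≤ b * (s' - c) * c ^ (-(3 : ℝ) / 2) * (1 *
          max (((s' - c) / 2) ^ (-(3 : ℝ) / 2))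
            (2 * √(s' - c) / ((b * (s' - c) / 2) ^ 2 / 2) ^ 2)) := by
        have hpow : s ^ (-(3 : ℝ) / 2) ≤ c ^ (-(3 : ℝ) / 2) :=
          rpow_le_rpow_of_nonpos hc hcs.le (by norm_num)
        have hexp_le : exp (-(a + b * s) ^ 2 / (2 * s)) ≤ 1 := by
          rw [exp_le_one_iff, neg_div]; exact neg_nonpos.2 (by positivity)
        have hsc' : 0 ≤ s' - c := by linarith
        have hkernel := kernel_le_max hb ⟨hcs, hss⟩
        gcongr b * (?_ - c) * ?_ * (?_ * ?_)
    _ = _ := by rw [one_mul]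

lemma intervalIntegrable (hb : 0 < b) (hc : 0 < c) (hcs : c ≤ s') :
    IntervalIntegrable (g2Integrand a b c s') volume c s' := by
  obtain ⟨C, hC⟩ := bddAbove_image_Ioc (a := a) (s' := s') hb hc
  rw [intervalIntegrable_iff_integrableOn_Ioc_of_le hcs]
  refine Measure.integrableOn_of_bounded (M := C) measure_Ioc_lt_top.ne
    (by unfold g2Integrand; fun_prop) (ae_restrict_of_forall_mem measurableSet_Ioc fun s hs => ?_)
  rw [Real.norm_of_nonneg (nonneg hb.le hc.le (Ioc_subset_Icc_self hs))]
  exact hC (mem_image_of_mem _ hs)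

lemma exponent_le_of_mem_Icc (ha : a ≤ 0) (hb : 0 ≤ b) (hc : 0 ≤ c) (hcs : c ≤ 5 * s' / 8)
    (hs' : 0 < s') (hs : s ∈ Icc (3 * s' / 4) (13 * s' / 16)) :
    (a + b * s) ^ 2 / (2 * s) + (b * (s - c)) ^ 2 / (2 * (s' - s)) ≤
      2 * a ^ 2 / (3 * s') + 13 * b ^ 2 * s' / 6 := by
  obtain ⟨hs₁, hs₂⟩ := hs
  have hs0 : 0 < s := by linarith
  have h₁ : (a + b * s) ^ 2 / (2 * s) ≤ 2 * a ^ 2 / (3 * s') + 13 * b ^ 2 * s' / 32 := by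
    have hab : (a + b * s) ^ 2 ≤ a ^ 2 + b ^ 2 * s ^ 2 := by
      nlinarith [mul_nonpos_of_nonpos_of_nonneg ha (mul_nonneg hb hs0.le)]
    calc (a + b * s) ^ 2 / (2 * s) ≤ (a ^ 2 + b ^ 2 * s ^ 2) / (2 * s) := by gcongr
      _ = a ^ 2 / (2 * s) + b ^ 2 * s / 2 := by field_simp
      _ ≤ a ^ 2 / (3 * s' / 2) + b ^ 2 * (13 * s' / 16) / 2 := by gcongr; linarith
      _ = 2 * a ^ 2 / (3 * s') + 13 * b ^ 2 * s' / 32 := by field_simp; ring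
  have h₂ : (b * (s - c)) ^ 2 / (2 * (s' - s)) ≤ 169 * b ^ 2 * s' / 96 := by
    calc (b * (s - c)) ^ 2 / (2 * (s' - s)) ≤ (b * (13 * s' / 16)) ^ 2 / (3 * s' / 8) := by
          have : 0 ≤ s - c := by linarith
          gcongr <;> linarith
      _ = 169 * b ^ 2 * s' / 96 := by field_simp; ring
  linarith

lemma le_of_mem_Icc (ha : a ≤ 0) (hb : 0 ≤ b) (hc : 0 ≤ c) (hcs : c ≤ 5 * s' / 8) (hs' : 0 < s')
    (hs : s ∈ Icc (3 * s' / 4) (13 * s' / 16)) :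
    b / s' ^ 2 * exp (-(2 * a ^ 2 / (3 * s') + 13 * b ^ 2 * s' / 6)) ≤ g2Integrand a b c s' s := by
  obtain ⟨hs₁, hs₂⟩ := hs
  have hs0 : 0 < s := by linarith
  have hu : 0 < s' - s := by linarith
  have hpow : 8 / s' ^ 3 ≤ (s * (s' - s)) ^ (-(3 : ℝ) / 2) :=
    calc 8 / s' ^ 3 = ((s' / 2) ^ 2) ^ (-(3 : ℝ) / 2) := by
          rw [rpow_neg_three_halves (by positivity), sqrt_sq (by positivity)]; field_simp; ring
      _ ≤ (s * (s' - s)) ^ (-(3 : ℝ) / 2) :=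
          rpow_le_rpow_of_nonpos (by positivity) (by nlinarith [sq_nonneg (2 * s - s')])
            (by norm_num)
  have hexp := exponent_le_of_mem_Icc ha hb hc hcs hs' ⟨hs₁, hs₂⟩
  calc b / s' ^ 2 * exp (-(2 * a ^ 2 / (3 * s') + 13 * b ^ 2 * s' / 6))
      = b * (s' / 8) * (8 / s' ^ 3) * exp (-(2 * a ^ 2 / (3 * s') + 13 * b ^ 2 * s' / 6)) := by
        field_simp
    _ ≤ b * (s - c) * (s * (s' - s)) ^ (-(3 : ℝ) / 2) *
          exp (-(a + b * s) ^ 2 / (2 * s) - (b * (s - c)) ^ 2 / (2 * (s' - s))) := by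
        have hsc : 0 ≤ b * (s - c) := mul_nonneg hb (by linarith)
        refine mul_le_mul (mul_le_mul (by gcongr; linarith) hpow (by positivity) hsc)
          (exp_le_exp.2 ?_) (exp_pos _).le
          (mul_nonneg hsc (rpow_nonneg (mul_nonneg hs0.le hu.le) _))
        linarith [neg_div (2 * s) ((a + b * s) ^ 2)]

lemma integral_ge (ha : a ≤ 0) (hb : 0 < b) (hc : 0 < c) (hcs : c ≤ 5 * s' / 8) :
    b / (16 * s') * exp (-(2 * a ^ 2 / (3 * s') + 13 * b ^ 2 * s' / 6)) ≤
      ∫ s in c..s', g2Integrand a b c s' s := by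
  have hs' : 0 < s' := by linarith
  have hint := intervalIntegrable (a := a) hb hc (by linarith)
  have hsub : uIcc (3 * s' / 4) (13 * s' / 16) ⊆ uIcc c s' := by
    rw [uIcc_of_le (by linarith), uIcc_of_le (by linarith)]
    exact Icc_subset_Icc (by linarith) (by linarith)
  calc b / (16 * s') * exp (-(2 * a ^ 2 / (3 * s') + 13 * b ^ 2 * s' / 6))
      = ∫ _ in (3 * s' / 4)..(13 * s' / 16),
          b / s' ^ 2 * exp (-(2 * a ^ 2 / (3 * s') + 13 * b ^ 2 * s' / 6)) := by
        rw [intervalIntegral.integral_const, smul_eq_mul]; field_simp; ring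
    _ ≤ ∫ s in (3 * s' / 4)..(13 * s' / 16), g2Integrand a b c s' s :=
        intervalIntegral.integral_mono_on (by linarith) intervalIntegrable_const
          (hint.mono_set hsub)
          fun s hs => le_of_mem_Icc ha hb.le hc.le hcs hs' hs
    _ ≤ ∫ s in c..s', g2Integrand a b c s' s :=
        intervalIntegral.integral_mono_interval (by linarith) (by linarith) (by linarith)
          (ae_restrict_of_forall_mem measurableSet_Ioc fun s hs =>
            nonneg hb.le hc.le (Ioc_subset_Icc_self hs)) hint

end g2Integrand

lemma exponent_le_cube {w r s' a b : ℝ} (hw : 0 ≤ w) (hs' : 8 < s') (hrs : (r + 1) ^ 2 < s')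
    (hr : 0 ≤ r) (ha : a ^ 2 = 2 * w * r ^ 2) (hb : b ^ 2 = w / 2) :
    2 * a ^ 2 / (3 * s') + 13 * b ^ 2 * s' / 6 ≤ w / 32 * (s' + 1) ^ 3 := by
  have hr2 : r ^ 2 / s' ≤ 1 := (div_le_one (by linarith)).2 (by nlinarith)
  have hcubic : 4 / 3 + 13 * s' / 12 ≤ (s' + 1) ^ 3 / 32 := by
    nlinarith [mul_pos (by linarith : (0 : ℝ) < s' - 8) (by positivity : (0 : ℝ) < (s' + 1) ^ 2)]
  calc 2 * a ^ 2 / (3 * s') + 13 * b ^ 2 * s' / 6 = w * (4 / 3 * (r ^ 2 / s') + 13 * s' / 12) := by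
        rw [ha, hb]; field_simp; ring
    _ ≤ w * (4 / 3 * 1 + 13 * s' / 12) := by gcongr
    _ ≤ w / 32 * (s' + 1) ^ 3 := by nlinarith

lemma const_mul_exp_neg_cube_lt {β w r s' a b p : ℝ} (hβ : 0 < β) (hr : 0 < r) (hs' : 8 < s')
    (hrs : (r + 1) ^ 2 < s') (hws : 8 < w * s') (ha : a ^ 2 = 2 * w * r ^ 2) (hb : b ^ 2 = w / 2)
    (hab : |a| * b = w * r) (hp : p = 1 + w / 32) :
    1024 * β / (9 * π) * r * exp (-p * (s' + 1) ^ 3) <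
      2 * β * (s' + 1) * (|a| / (2 * π) *
        (b / (16 * s') * exp (-(2 * a ^ 2 / (3 * s') + 13 * b ^ 2 * s' / 6)))) := by
  have hw : 0 < w := pos_of_mul_pos_left (by linarith) (by linarith : (0 : ℝ) ≤ s')
  set Z := (s' + 1) ^ 3 with hZ
  have hZ₁ : 729 < Z := by rw [hZ]; nlinarith [sq_nonneg (s' + 1)]
  have hZ₂ : 81 * s' ≤ Z := by rw [hZ]; nlinarith [sq_nonneg (s' + 1)]
  have hexpZ : Z ^ 2 / 2 ≤ exp Z := by
    linarith [quadratic_le_exp_of_nonneg (by linarith : (0 : ℝ) ≤ Z)]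
  have key : 16384 < 9 * w * exp Z := by
    nlinarith [mul_le_mul hZ₂ hZ₁.le (by norm_num) (by linarith)]
  have hE := exponent_le_cube hw.le hs' hrs hr.le ha hb
  calc 1024 * β / (9 * π) * r * exp (-p * Z)
      = β * r / π * (1024 / 9) * exp (-p * Z) := by ring
    _ < β * r / π * (w * exp Z / 16) * exp (-p * Z) :=
        mul_lt_mul_of_pos_right (mul_lt_mul_of_pos_left (by linarith) (by positivity)) (exp_pos _)
    _ = β * w * r / (16 * π) * exp (-(w / 32 * Z)) := by
        rw [hp, show -(w / 32 * Z) = Z + -(1 + w / 32) * Z by ring, exp_add]; ring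
    _ ≤ β * w * r * (s' + 1) / (16 * π * s') *
          exp (-(2 * a ^ 2 / (3 * s') + 13 * b ^ 2 * s' / 6)) := by
        have hfactor : β * w * r / (16 * π) ≤ β * w * r * (s' + 1) / (16 * π * s') := by
          rw [div_le_div_iff₀ (by positivity) (by positivity)]
          nlinarith [mul_pos (mul_pos (mul_pos hβ hw) hr) pi_pos]
        exact mul_le_mul hfactor (exp_le_exp.2 (by linarith)) (exp_pos _).le (by positivity)
    _ = _ := by
        rw [mul_assoc β w r, ← hab]; field_simp

lemma ou_coeffs {β σ x0 θ : ℝ} (hβ : 0 < β) (hσ : 0 < σ) (hθ : 0 < θ) (hx0 : θ < x0) :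
    (θ - x0) * √(2 * β) / σ < 0 ∧
    ((θ - x0) * √(2 * β) / σ) ^ 2 = 2 * (β * (θ / σ) ^ 2) * (x0 / θ - 1) ^ 2 ∧
    (θ / 2 * √(2 * β) / σ) ^ 2 = β * (θ / σ) ^ 2 / 2 ∧
    |(θ - x0) * √(2 * β) / σ| * (θ / 2 * √(2 * β) / σ) = β * (θ / σ) ^ 2 * (x0 / θ - 1) := by
  have h2β : √(2 * β) ^ 2 = 2 * β := sq_sqrt (by positivity)
  have ha : (θ - x0) * √(2 * β) / σ < 0 :=
    div_neg_of_neg_of_pos (mul_neg_of_neg_of_pos (by linarith) (by positivity)) hσ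
  refine ⟨ha, ?_, ?_, ?_⟩
  · rw [div_pow, mul_pow, h2β]; field_simp; ring
  · rw [div_pow, mul_pow, h2β]; field_simp
  · rw [abs_of_neg ha]; field_simp; rw [h2β]; ring

/-- Main theorem through the explicit integral lower bound `g2`: for every `t > u`,
`2β·e^{2βt}·g2(e^{2βt} − 1) > k·exp(−p·e^{6βt})`. -/
theorem stmt_19 (β σ x0 θ : ℝ) (hβ : 0 < β) (hσ : 0 < σ) (hθ : 0 < θ)
    (hx0 : θ < x0) (g2 : ℝ → ℝ)
    (hg2 : ∀ s' : ℝ, g2 s' =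
      (|(θ - x0) * Real.sqrt (2 * β) / σ| / (2 * Real.pi)) *
        ∫ s in (2 * (Real.sqrt (s' + 1) - 1))..s',
          (((θ - x0) * Real.sqrt (2 * β) / σ + ((θ / 2) * Real.sqrt (2 * β) / σ) * s)
              - (Real.sqrt (2 * β) / σ) * (θ * Real.sqrt (s' + 1) - x0)) *
            (s * (s' - s)) ^ (-(3 : ℝ) / 2) *
            Real.exp
              (-((θ - x0) * Real.sqrt (2 * β) / σ + ((θ / 2) * Real.sqrt (2 * β) / σ) * s) ^ 2
                  / (2 * s)
                - (((θ - x0) * Real.sqrt (2 * β) / σ + ((θ / 2) * Real.sqrt (2 * β) / σ) * s)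
                    - (Real.sqrt (2 * β) / σ) * (θ * Real.sqrt (s' + 1) - x0)) ^ 2
                  / (2 * (s' - s))))
    (k p u : ℝ)
    (hk : k = (1024 * β / (9 * Real.pi)) * (x0 / θ - 1))
    (hp : p = 1 + (β / 32) * (θ / σ) ^ 2)
    (hu : u = (1 / (2 * β)) *
      Real.log (1 + max (max 8 (1 + x0 ^ 2 / θ ^ 2)) (8 * σ ^ 2 / (β * θ ^ 2)))) :
    ∀ t : ℝ, u < t →
      2 * β * Real.exp (2 * β * t) * g2 (Real.exp (2 * β * t) - 1) >
        k * Real.exp (-p * Real.exp (6 * β * t)) := by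
  intro t ht
  obtain ⟨s', hs'⟩ : ∃ s', exp (2 * β * t) = s' + 1 := ⟨exp (2 * β * t) - 1, by ring⟩
  have h6 : exp (6 * β * t) = (s' + 1) ^ 3 := by rw [← hs', ← exp_nat_mul]; ring_nf
  rw [hu, one_div_mul_eq_div, div_lt_iff₀' (by positivity), log_lt_iff_lt_exp (by positivity),
    hs', add_comm s' 1, add_lt_add_iff_left, max_lt_iff, max_lt_iff] at ht
  obtain ⟨⟨h8, hx0s⟩, hσs⟩ := ht
  have hy : 3 < √(s' + 1) := by rw [lt_sqrt (by norm_num)]; linarith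
  have hy2 := sq_sqrt (by linarith : (0 : ℝ) ≤ s' + 1)
  obtain ⟨ha_neg, ha, hb, hab⟩ := ou_coeffs hβ hσ hθ hx0
  have hshift : (θ - x0) * √(2 * β) / σ + θ / 2 * √(2 * β) / σ * (2 * (√(s' + 1) - 1)) =
      √(2 * β) / σ * (θ * √(s' + 1) - x0) := by ring
  rw [hs', h6, add_sub_cancel_right, hg2, hk]
  simp only [g2Integrand_eq hshift]
  have hws : 8 < β * (θ / σ) ^ 2 * s' := by
    rw [show β * (θ / σ) ^ 2 * s' = s' * (β * θ ^ 2) / σ ^ 2 by ring, lt_div_iff₀ (by positivity)]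
    exact (div_lt_iff₀ (by positivity)).1 hσs
  refine lt_of_lt_of_le (const_mul_exp_neg_cube_lt hβ (sub_pos.2 ((one_lt_div hθ).2 hx0)) h8
    (by rw [sub_add_cancel, div_pow]; linarith) hws ha hb hab (by rw [hp]; ring)) ?_
  gcongr 2 * β * (s' + 1) * (_ * ?_)
  exact g2Integrand.integral_ge ha_neg.le (by positivity) (by linarith) (by nlinarith)
end
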